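/- In the MDP Client ∥ SliceAtt (with unbounded capacity c ≥ n), every transition with positive probability changes the value of at least one variable in V = {pc_c, ctr_c, pc_a, ctr_a}; equivalently, there is no transition (s, α, p, s') with p > 0 such that s' agrees with s on all four variables pc_c, ctr_c, pc_a and ctr_a. -/
import Mathlib


attribute [local instance] Classical.propDecidable

/-- Actions of the composed system `Client ∥ SliceAtt`: the synchronized `busy` action
(sending/intercepting a slice), an internal client action and an internal attacker action. -/
inductive SAct : Type
  | busy : SAct
  | ctau : SAct
  | atau : SAct

/-- A state of the composed system `Client ∥ SliceAtt`, with servers indexed by `I` and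
`n` slices to send: `pcc`, `sc`, `ctrc` and the per-server counters `sctr` are the client
variables (`sc = none` encodes `s_c = 0`), while `pca` and `ctra` are the attacker
variables (`pca = 3` encodes `done`). -/
structure SState (I : Type*) (n : ℕ) where
  pcc : Fin 3
  sc : Option I
  ctrc : Fin (n + 1)
  sctr : I → Fin (n + 1)
  pca : Fin 4
  ctra : Fin (n + 1)

/-- Increment of a bounded counter (saturating at `n`; all increments performed by the
model happen strictly below `n`). -/
def finInc {n : ℕ} (x : Fin (n + 1)) : Fin (n + 1) := ⟨min (x.1 + 1) n, by omega⟩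

/-- Client picks server `i` as recipient. -/
def pickT {I : Type*} {n : ℕ} (s : SState I n) (i : I) : SState I n :=
  { s with pcc := 1, sc := some i }

/-- Client retries after finding the chosen server full. -/
def retryT {I : Type*} {n : ℕ} (s : SState I n) : SState I n :=
  { s with pcc := 0, sc := none }

/-- Client terminates after sending all `n` slices. -/
def finT {I : Type*} {n : ℕ} (s : SState I n) : SState I n :=
  { s with pcc := 2 }

/-- Client part of the `busy` (send) step: the slice is sent to server `i`. -/
def sendT {I : Type*} [DecidableEq I] {n : ℕ} (s : SState I n) (i : I) : SState I n :=
  { s with pcc := 0, sc := none, ctrc := finInc s.ctrc,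
           sctr := Function.update s.sctr i (finInc (s.sctr i)) }

/-- Joint `busy` step in which the attacker intercepts the slice sent to server `i`. -/
def interceptT {I : Type*} [DecidableEq I] {n : ℕ} (k₁ : ℕ) (s : SState I n) (i : I) :
    SState I n :=
  { sendT s i with ctra := finInc s.ctra,
                   pca := if k₁ ≤ (finInc s.ctra : ℕ) then 1 else 0 }

/-- Joint `busy` step in which the attacker misses the slice sent to server `i`. -/
def missT {I : Type*} [DecidableEq I] {n : ℕ} (s : SState I n) (i : I) : SState I n :=
  sendT s i

/-- Attacker succeeds in reconstructing the message body (`pc_a = done`). -/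
def doneT {I : Type*} {n : ℕ} (s : SState I n) : SState I n := { s with pca := 3 }

/-- Attacker fails the reconstruction attempt and goes back to intercepting. -/
def goT {I : Type*} {n : ℕ} (s : SState I n) : SState I n := { s with pca := 2 }

/-- The slice attacker is ready to synchronize on `busy`. -/
def attBusyOK {I : Type*} {n : ℕ} (k₁ k₂ : ℕ) (s : SState I n) : Prop :=
  (s.pca = 0 ∧ (s.ctra : ℕ) < k₁) ∨ (s.pca = 2 ∧ (s.ctra : ℕ) < k₂)

/-- Transition probabilities of the composed system `Client ∥ SliceAtt`, with capacity `c`,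
thresholds `k₁ ≤ k₂ ≤ n`, probability `p i` of picking server `i`, probability `a i` of
intercepting a slice traveling to server `i`, and reconstruction probabilities `x j`. -/
noncomputable def slicePr {I : Type*} [DecidableEq I] {n : ℕ} (c k₁ k₂ : ℕ)
    (p a : I → ℝ) (x : ℕ → ℝ) (s : SState I n) (α : SAct) (t : SState I n) : ℝ :=
  match α with
  | SAct.ctau =>
      (match t.sc with
        | some i => if s.pcc = 0 ∧ (s.ctrc : ℕ) < n ∧ t = pickT s i then p i else 0
        | none => 0)
      + (if (∃ i, s.sc = some i ∧ c ≤ (s.sctr i : ℕ)) ∧ s.pcc = 1 ∧ t = retryT s then 1 else 0)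
      + (if s.pcc = 0 ∧ (s.ctrc : ℕ) = n ∧ t = finT s then 1 else 0)
  | SAct.busy =>
      match s.sc with
      | some i =>
          if s.pcc = 1 ∧ (s.sctr i : ℕ) < c ∧ attBusyOK k₁ k₂ s then
            (if t = interceptT k₁ s i then a i else 0)
            + (if t = missT s i then 1 - a i else 0)
          else 0
      | none => 0
  | SAct.atau =>
      if s.pca = 1 ∧ k₁ ≤ (s.ctra : ℕ) then
        (if t = doneT s then x (s.ctra : ℕ) else 0)
        + (if t = goT s then 1 - x (s.ctra : ℕ) else 0)
      else 0

/-- The tuple of values of the variables `V = {pc_c, ctr_c, pc_a, ctr_a}` in a state. -/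
def vtupl {I : Type*} {n : ℕ} (s : SState I n) : Fin 3 × Fin (n + 1) × Fin 4 × Fin (n + 1) :=
  (s.pcc, s.ctrc, s.pca, s.ctra)

/-- `s ≡_V s'`: the two states (possibly of systems with different server index sets) agree on
all the variables in `V = {pc_c, ctr_c, pc_a, ctr_a}`. -/
def VeqS {I₁ I₂ : Type*} {n : ℕ} (s : SState I₁ n) (t : SState I₂ n) : Prop :=
  vtupl s = vtupl t

lemma no_pick {I : Type*} {n : ℕ} {s t : SState I n} {i : I}
    (h : s.pcc = t.pcc) (h0 : s.pcc = 0) (ht : t = pickT s i) : False := by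
  subst ht; rw [h0] at h; simp only [pickT] at h; exact absurd h (by decide)

lemma no_retry {I : Type*} {n : ℕ} {s t : SState I n}
    (h : s.pcc = t.pcc) (h0 : s.pcc = 1) (ht : t = retryT s) : False := by
  subst ht; rw [h0] at h; simp only [retryT] at h; exact absurd h (by decide)

lemma no_fin {I : Type*} {n : ℕ} {s t : SState I n}
    (h : s.pcc = t.pcc) (h0 : s.pcc = 0) (ht : t = finT s) : False := by
  subst ht; rw [h0] at h; simp only [finT] at h; exact absurd h (by decide)

lemma no_intercept {I : Type*} [DecidableEq I] {n : ℕ} {k₁ : ℕ} {s t : SState I n} {i : I}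
    (h : s.pcc = t.pcc) (h0 : s.pcc = 1) (ht : t = interceptT k₁ s i) : False := by
  subst ht; rw [h0] at h; simp only [interceptT, sendT] at h; exact absurd h (by decide)

lemma no_miss {I : Type*} [DecidableEq I] {n : ℕ} {s t : SState I n} {i : I}
    (h : s.pcc = t.pcc) (h0 : s.pcc = 1) (ht : t = missT s i) : False := by
  subst ht; rw [h0] at h; simp only [missT, sendT] at h; exact absurd h (by decide)

lemma no_done {I : Type*} {n : ℕ} {s t : SState I n}
    (h : s.pca = t.pca) (h0 : s.pca = 1) (ht : t = doneT s) : False := by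
  subst ht; rw [h0] at h; simp only [doneT] at h; exact absurd h (by decide)

lemma no_go {I : Type*} {n : ℕ} {s t : SState I n}
    (h : s.pca = t.pca) (h0 : s.pca = 1) (ht : t = goT s) : False := by
  subst ht; rw [h0] at h; simp only [goT] at h; exact absurd h (by decide)

/-- In `Client ∥ SliceAtt` (with unbounded capacity `c ≥ n`) every transition of positive
probability changes at least one of the variables in `V = {pc_c, ctr_c, pc_a, ctr_a}`:
there is no positive-probability transition whose target agrees with its source on all
four of these variables ("Case (C1) is impossible"). -/
theorem stmt3 {I : Type*} [DecidableEq I] {n : ℕ} (c k₁ k₂ : ℕ)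
    (hk₁₂ : k₁ ≤ k₂) (hk₂n : k₂ ≤ n) (hcap : n ≤ c)
    (p a : I → ℝ) (x : ℕ → ℝ)
    (hp : ∀ i, 0 ≤ p i) (ha : ∀ i, 0 ≤ a i ∧ a i ≤ 1) (hx : ∀ j, 0 ≤ x j ∧ x j ≤ 1)
    (s t : SState I n) (α : SAct)
    (hpos : 0 < slicePr c k₁ k₂ p a x s α t) :
    ¬ (s.pcc = t.pcc ∧ s.ctrc = t.ctrc ∧ s.pca = t.pca ∧ s.ctra = t.ctra) := by
  rintro ⟨h1, h2, h3, h4⟩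
  cases α with
  | ctau =>
    rcases hsc : t.sc with _ | i
    · simp only [slicePr, hsc] at hpos
      split_ifs at hpos <;>
        first
          | (have w : (∃ i, s.sc = some i ∧ c ≤ (s.sctr i : ℕ)) ∧ s.pcc = 1 ∧ t = retryT s :=
               by assumption
             exact no_retry h1 w.2.1 w.2.2)
          | (have w : s.pcc = 0 ∧ (s.ctrc : ℕ) = n ∧ t = finT s := by assumption
             exact no_fin h1 w.1 w.2.2)
          | norm_num at hpos
    · simp only [slicePr, hsc] at hpos
      split_ifs at hpos <;>
        first
          | (have w : s.pcc = 0 ∧ (s.ctrc : ℕ) < n ∧ t = pickT s i := by assumption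
             exact no_pick h1 w.1 w.2.2)
          | (have w : (∃ i, s.sc = some i ∧ c ≤ (s.sctr i : ℕ)) ∧ s.pcc = 1 ∧ t = retryT s :=
               by assumption
             exact no_retry h1 w.2.1 w.2.2)
          | (have w : s.pcc = 0 ∧ (s.ctrc : ℕ) = n ∧ t = finT s := by assumption
             exact no_fin h1 w.1 w.2.2)
          | norm_num at hpos
  | busy =>
    rcases hsc : s.sc with _ | i <;> simp only [slicePr, hsc] at hpos
    · norm_num at hpos
    · split_ifs at hpos <;>
        first
          | (have w : s.pcc = 1 ∧ (s.sctr i : ℕ) < c ∧ attBusyOK k₁ k₂ s := by assumption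
             have w' : t = interceptT k₁ s i := by assumption
             exact no_intercept h1 w.1 w')
          | (have w : s.pcc = 1 ∧ (s.sctr i : ℕ) < c ∧ attBusyOK k₁ k₂ s := by assumption
             have w' : t = missT s i := by assumption
             exact no_miss h1 w.1 w')
          | norm_num at hpos
  | atau =>
    simp only [slicePr] at hpos
    split_ifs at hpos <;>
      first
        | (have w : s.pca = 1 ∧ k₁ ≤ (s.ctra : ℕ) := by assumption
           have w' : t = doneT s := by assumption
           exact no_done h3 w.1 w')
        | (have w : s.pca = 1 ∧ k₁ ≤ (s.ctra : ℕ) := by assumption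
           have w' : t = goT s := by assumption
           exact no_go h3 w.1 w')
        | norm_num at hpos
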